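/- Let X be a nontrivial real or complex Banach space such that every P ∈ 𝒫(ᵏX : X) is a limit of strongly norm-attaining k-homogeneous polynomials (e.g., X has the Radon–Nikodým property). If |x*(x)| = 1 for every x ∈ ρ̃𝒫(ᵏX) and every extreme point x* of B_{X*}, then n^(k)(X) = 1. -/

import Mathlib

open Metric Filter Topology Set

/-- The sup norm of a function over the closed unit ball. -/
noncomputable def supNorm {X Y : Type*} [NormedAddCommGroup X] [NormedAddCommGroup Y]
    (f : X → Y) : ℝ :=
  sSup ((fun x => ‖f x‖) '' Metric.closedBall (0 : X) 1)

/-- `f` strongly attains its (sup) norm at `x₀`: every maximizing sequence in the closed unit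
ball has a subsequence converging to a unimodular multiple of `x₀`. -/
def StronglyAttains (𝕂 : Type*) [RCLike 𝕂] {X Y : Type*} [NormedAddCommGroup X]
    [NormedSpace 𝕂 X] [NormedAddCommGroup Y] (f : X → Y) (x₀ : X) : Prop :=
  ∀ xs : ℕ → X, (∀ n, xs n ∈ Metric.closedBall (0 : X) 1) →
    Tendsto (fun n => ‖f (xs n)‖) atTop (nhds (supNorm f)) →
    ∃ (α : 𝕂) (φ : ℕ → ℕ), StrictMono φ ∧ ‖α‖ = 1 ∧
      Tendsto (fun n => xs (φ n)) atTop (nhds (α • x₀))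

/-- The `k`-homogeneous polynomial associated to a continuous `k`-multilinear map. -/
noncomputable def polyEval {𝕂 : Type*} [RCLike 𝕂] {X Y : Type*} [NormedAddCommGroup X]
    [NormedSpace 𝕂 X] [NormedAddCommGroup Y] [NormedSpace 𝕂 Y] {k : ℕ}
    (L : ContinuousMultilinearMap 𝕂 (fun _ : Fin k => X) Y) : X → Y :=
  fun x => L (fun _ => x)

/-- The set `ρ̃𝒫(ᵏX)` of points of the closed unit ball at which some nonzero bounded
`k`-homogeneous scalar polynomial strongly attains its norm. -/
def polyAttainPts (𝕂 : Type*) [RCLike 𝕂] (X : Type*) [NormedAddCommGroup X]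
    [NormedSpace 𝕂 X] (k : ℕ) : Set X :=
  {x₀ | x₀ ∈ Metric.closedBall (0 : X) 1 ∧
    ∃ L : ContinuousMultilinearMap 𝕂 (fun _ : Fin k => X) 𝕂,
      polyEval L ≠ 0 ∧ StronglyAttains 𝕂 (polyEval L) x₀}

/-- Numerical radius `v(f) = sup { |x*(f x)| : (x, x*) ∈ Π(X) }`. -/
noncomputable def numRadius (𝕂 : Type*) [RCLike 𝕂] {X : Type*} [NormedAddCommGroup X]
    [NormedSpace 𝕂 X] (f : X → X) : ℝ :=
  sSup {r | ∃ (x : X) (x' : X →L[𝕂] 𝕂), ‖x‖ = 1 ∧ ‖x'‖ = 1 ∧ x' x = 1 ∧ r = ‖x' (f x)‖}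

/-- The `k`-polynomial numerical index `n^(k)(X)`. -/
noncomputable def polyNumIndex (𝕂 : Type*) [RCLike 𝕂] (X : Type*) [NormedAddCommGroup X]
    [NormedSpace 𝕂 X] (k : ℕ) : ℝ :=
  sInf {r | ∃ L : ContinuousMultilinearMap 𝕂 (fun _ : Fin k => X) X,
    supNorm (polyEval L) = 1 ∧ r = numRadius 𝕂 (polyEval L)}

/-- The numerical index `n(X)` of a Banach space. -/
noncomputable def numIndex (𝕂 : Type*) [RCLike 𝕂] (X : Type*) [NormedAddCommGroup X]
    [NormedSpace 𝕂 X] : ℝ :=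
  sInf {r | ∃ T : X →L[𝕂] X, ‖T‖ = 1 ∧ r = numRadius 𝕂 (⇑T)}

/-- `x` is an extreme point of the convex set `s` : `y + z = 2x` with `y, z ∈ s` forces
`y = z = x`. -/
def IsExtremePt {E : Type*} [AddCommGroup E] (s : Set E) (x : E) : Prop :=
  x ∈ s ∧ ∀ y ∈ s, ∀ z ∈ s, y + z = x + x → y = x ∧ z = x

/-- `x` is a strongly exposed point of the closed unit ball. -/
def StronglyExposedPt (𝕂 : Type*) [RCLike 𝕂] {X : Type*} [NormedAddCommGroup X]
    [NormedSpace 𝕂 X] (x : X) : Prop :=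
  x ∈ Metric.closedBall (0 : X) 1 ∧ ∃ x' : X →L[𝕂] 𝕂, x' ≠ 0 ∧ ‖x'‖ ≤ 1 ∧
    (∀ y ∈ Metric.closedBall (0 : X) 1, RCLike.re (x' y) ≤ RCLike.re (x' x)) ∧
    ∀ xs : ℕ → X, (∀ n, xs n ∈ Metric.closedBall (0 : X) 1) →
      Tendsto (fun n => RCLike.re (x' (xs n))) atTop (nhds (RCLike.re (x' x))) →
      Tendsto xs atTop (nhds x)

/-- `x'` is a weak-* exposed point of the dual unit ball. -/
def WeakStarExposed (𝕂 : Type*) [RCLike 𝕂] {X : Type*} [NormedAddCommGroup X]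
    [NormedSpace 𝕂 X] (x' : X →L[𝕂] 𝕂) : Prop :=
  ‖x'‖ ≤ 1 ∧ ∃ x ∈ Metric.closedBall (0 : X) 1, x' x = 1 ∧
    ∀ y' : X →L[𝕂] 𝕂, ‖y'‖ ≤ 1 → y' x = 1 → y' = x'

/-- `f` is a strong peak function at `x₀`: `f` is nonzero on the ball and every maximizing
sequence in the closed unit ball converges to `x₀`. -/
def StrongPeakAt {X Y : Type*} [NormedAddCommGroup X] [NormedAddCommGroup Y]
    (f : X → Y) (x₀ : X) : Prop :=
  (∃ x ∈ Metric.closedBall (0 : X) 1, f x ≠ 0) ∧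
    ∀ xs : ℕ → X, (∀ n, xs n ∈ Metric.closedBall (0 : X) 1) →
      Tendsto (fun n => ‖f (xs n)‖) atTop (nhds (supNorm f)) →
      Tendsto xs atTop (nhds x₀)

/-- Complex extreme point of the closed unit ball. -/
def ComplexExtremePoint {X : Type*} [NormedAddCommGroup X] [NormedSpace ℂ X] (x : X) : Prop :=
  x ∈ Metric.closedBall (0 : X) 1 ∧
    ∀ y : X, (∀ θ : ℝ, ‖x + Complex.exp (θ * Complex.I) • y‖ ≤ 1) → y = 0

/-- Membership in `A_b(B_X : Y)`: bounded, continuous on the closed unit ball and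
holomorphic on the open unit ball. -/
def MemAb {X Y : Type*} [NormedAddCommGroup X] [NormedSpace ℂ X] [NormedAddCommGroup Y]
    [NormedSpace ℂ Y] (f : X → Y) : Prop :=
  ContinuousOn f (Metric.closedBall (0 : X) 1) ∧
    (∃ C, ∀ x ∈ Metric.closedBall (0 : X) 1, ‖f x‖ ≤ C) ∧
    DifferentiableOn ℂ f (Metric.ball (0 : X) 1)

/-- Membership in `A_u(B_X : Y)`: additionally uniformly continuous on the closed ball. -/
def MemAu {X Y : Type*} [NormedAddCommGroup X] [NormedSpace ℂ X] [NormedAddCommGroup Y]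
    [NormedSpace ℂ Y] (f : X → Y) : Prop :=
  MemAb f ∧ UniformContinuousOn f (Metric.closedBall (0 : X) 1)

/-- The set `ρA_u(B_X)` of strong peak points of `A_u(B_X)`. -/
def strongPeakPtsAu (X : Type*) [NormedAddCommGroup X] [NormedSpace ℂ X] : Set X :=
  {x₀ | ∃ f : X → ℂ, MemAu f ∧ StrongPeakAt f x₀}

/-- The holomorphic numerical index `n_u(X)`. -/
noncomputable def holNumIndex (X : Type*) [NormedAddCommGroup X] [NormedSpace ℂ X] : ℝ :=
  sInf {r | ∃ f : X → X, MemAu f ∧ supNorm f = 1 ∧ r = numRadius ℂ f}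

/-! Given `P` with `‖P‖ = 1` and `ε > 0`, pick `Q` within `ε` of `P` that strongly attains its
norm at `x₀`. By Krein–Milman the weak-* compact face of `B_{X*}` norming `Q x₀` has an extreme
point `e`, which is then extreme in `B_{X*}`. The scalar polynomial `e ∘ Q` strongly attains its
norm at `x₀`, so `x₀ ∈ ρ̃𝒫(ᵏX)` and `|e x₀| = 1`; hence `(x₀, e / e x₀) ∈ Π(X)` and
`v(P) ≥ |e (P x₀)| ≥ ‖Q‖ - ε ≥ 1 - 2ε`. -/

section Polynomial

variable {𝕂 X Y : Type*} [RCLike 𝕂] [NormedAddCommGroup X] [NormedSpace 𝕂 X]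
  [NormedAddCommGroup Y] [NormedSpace 𝕂 Y] {k : ℕ}
  (L : ContinuousMultilinearMap 𝕂 (fun _ : Fin k => X) Y)

lemma continuous_polyEval : Continuous (polyEval L) :=
  L.cont.comp (continuous_pi fun _ => continuous_id)

lemma polyEval_smul (c : 𝕂) (x : X) : polyEval L (c • x) = c ^ k • polyEval L x := by
  simpa [polyEval, Finset.prod_const] using L.map_smul_univ (fun _ => c) (fun _ => x)

lemma norm_polyEval_le_opNorm {x : X} (hx : x ∈ closedBall (0 : X) 1) :
    ‖polyEval L x‖ ≤ ‖L‖ := by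
  have hprod : ∏ _i : Fin k, ‖x‖ ≤ 1 :=
    Finset.prod_le_one (fun _ _ => norm_nonneg x) fun _ _ => mem_closedBall_zero_iff.1 hx
  exact (L.le_opNorm _).trans (mul_le_of_le_one_right (norm_nonneg L) hprod)

lemma bddAbove_norm_polyEval_image :
    BddAbove ((fun x => ‖polyEval L x‖) '' closedBall (0 : X) 1) :=
  ⟨‖L‖, forall_mem_image.2 fun _ => norm_polyEval_le_opNorm L⟩

lemma norm_polyEval_le_supNorm {x : X} (hx : x ∈ closedBall (0 : X) 1) :
    ‖polyEval L x‖ ≤ supNorm (polyEval L) :=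
  le_csSup (bddAbove_norm_polyEval_image L) (mem_image_of_mem _ hx)

lemma supNorm_polyEval_le {C : ℝ} (hC : ∀ x ∈ closedBall (0 : X) 1, ‖polyEval L x‖ ≤ C) :
    supNorm (polyEval L) ≤ C :=
  csSup_le ((nonempty_closedBall.2 zero_le_one).image _) (forall_mem_image.2 hC)

variable {L}

lemma StronglyAttains.mem_closedBall_and_norm_eq_supNorm {x₀ : X}
    (h : StronglyAttains 𝕂 (polyEval L) x₀) :
    x₀ ∈ closedBall (0 : X) 1 ∧ ‖polyEval L x₀‖ = supNorm (polyEval L) := by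
  obtain ⟨u, -, hu, hmem⟩ := exists_seq_tendsto_sSup
    ((nonempty_closedBall.2 zero_le_one).image _) (bddAbove_norm_polyEval_image L)
  choose xs hxs hfxs using hmem
  have hmax : Tendsto (fun n => ‖polyEval L (xs n)‖) atTop (𝓝 (supNorm (polyEval L))) := by
    simpa only [hfxs, supNorm] using hu
  obtain ⟨α, φ, hφ, hα, hlim⟩ := h xs hxs hmax
  have hαx₀ : α • x₀ ∈ closedBall (0 : X) 1 :=
    isClosed_closedBall.mem_of_tendsto hlim (Eventually.of_forall fun n => hxs _)
  have hval : ‖polyEval L (α • x₀)‖ = supNorm (polyEval L) :=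
    tendsto_nhds_unique (((continuous_polyEval L).tendsto _).comp hlim).norm
      (hmax.comp hφ.tendsto_atTop)
  rw [mem_closedBall_zero_iff, norm_smul, hα, one_mul] at hαx₀
  rw [polyEval_smul, norm_smul, norm_pow, hα, one_pow, one_mul] at hval
  exact ⟨mem_closedBall_zero_iff.2 hαx₀, hval⟩

end Polynomial

section NormingFunctional

variable {𝕂 X : Type*} [RCLike 𝕂] [NormedAddCommGroup X] [NormedSpace 𝕂 X]

lemma re_apply_le_norm {x' : X →L[𝕂] 𝕂} (hx' : ‖x'‖ ≤ 1) (v : X) : RCLike.re (x' v) ≤ ‖v‖ :=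
  (RCLike.re_le_norm _).trans ((x'.le_of_opNorm_le hx' v).trans_eq (one_mul _))

lemma apply_eq_norm_of_norm_le_re {x' : X →L[𝕂] 𝕂} (hx' : ‖x'‖ ≤ 1) {v : X}
    (hv : ‖v‖ ≤ RCLike.re (x' v)) : x' v = ‖v‖ := by
  have hle : ‖x' v‖ ≤ ‖v‖ := (x'.le_of_opNorm_le hx' v).trans_eq (one_mul _)
  rw [← RCLike.re_eq_self_of_le (hle.trans hv), le_antisymm (re_apply_le_norm hx' v) hv]

variable (𝕂) in
def normingFace (v : X) : Set (WeakDual 𝕂 X) :=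
  WeakDual.toStrongDual ⁻¹' closedBall 0 1 ∩ {x' | x' v = ‖v‖}

lemma isCompact_normingFace (v : X) : IsCompact (normingFace 𝕂 v) :=
  (WeakDual.isCompact_closedBall 0 1).inter_right
    (isClosed_singleton.preimage (WeakDual.eval_continuous v))

lemma normingFace_nonempty (v : X) : (normingFace 𝕂 v).Nonempty := by
  obtain ⟨g, hg, hgv⟩ := exists_dual_vector'' 𝕂 v
  exact ⟨StrongDual.toWeakDual g, mem_closedBall_zero_iff.2 hg, hgv⟩

lemma isExtreme_normingFace (v : X) :
    IsExtreme ℝ (WeakDual.toStrongDual ⁻¹' closedBall 0 1) (normingFace 𝕂 v) := by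
  refine ⟨inter_subset_left, ?_⟩
  rintro y hy z hz x ⟨-, hxv⟩ ⟨a, b, ha, hb, hab, rfl⟩
  have hy1 : ‖WeakDual.toStrongDual y‖ ≤ 1 := mem_closedBall_zero_iff.1 hy
  have hzle : RCLike.re (z v) ≤ ‖v‖ := re_apply_le_norm (mem_closedBall_zero_iff.1 hz) v
  have hsum : a * RCLike.re (y v) + b * RCLike.re (z v) = ‖v‖ := by
    simpa [RCLike.smul_re] using congrArg RCLike.re
      (show (a • WeakDual.toStrongDual y + b • WeakDual.toStrongDual z) v = ‖v‖ from hxv)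
  have hconv : a * ‖v‖ + b * ‖v‖ = ‖v‖ := by rw [← add_mul, hab, one_mul]
  have hya : a * ‖v‖ ≤ a * RCLike.re (y v) := by
    linarith [mul_le_mul_of_nonneg_left hzle hb.le]
  exact ⟨hy, apply_eq_norm_of_norm_le_re hy1 (le_of_mul_le_mul_left hya ha)⟩

lemma isExtremePt_of_mem_extremePoints {E : Type*} [AddCommGroup E] [Module ℝ E] {s : Set E}
    {x : E} (hx : x ∈ s.extremePoints ℝ) : IsExtremePt s x := by
  refine ⟨hx.1, fun y hy z hz hyz => (mem_extremePoints.1 hx).2 y hy z hz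
    ⟨2⁻¹, 2⁻¹, by norm_num, by norm_num, by norm_num, ?_⟩⟩
  rw [← smul_add, hyz, ← two_smul ℝ x, smul_smul]
  norm_num

lemma exists_isExtremePt_apply_eq_norm (v : X) :
    ∃ x' : X →L[𝕂] 𝕂, IsExtremePt (closedBall 0 1) x' ∧ x' v = ‖v‖ := by
  -- instance search does not see through the `WeakDual` synonym of `WeakBilin`
  have : LocallyConvexSpace ℝ (WeakDual 𝕂 X) := WeakBilin.locallyConvexSpace
  obtain ⟨e, he⟩ := (isCompact_normingFace (𝕂 := 𝕂) v).extremePoints_nonempty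
    (normingFace_nonempty v)
  have he' := (isExtreme_normingFace v).extremePoints_subset_extremePoints he
  exact ⟨WeakDual.toStrongDual e, isExtremePt_of_mem_extremePoints he', he.1.2⟩

end NormingFunctional

lemma StronglyAttains.comp_of_norm_apply_eq {𝕂 X Y : Type*} [RCLike 𝕂] [NormedAddCommGroup X]
    [NormedSpace 𝕂 X] [NormedAddCommGroup Y] [NormedSpace 𝕂 Y] {k : ℕ}
    {Q : ContinuousMultilinearMap 𝕂 (fun _ : Fin k => X) Y} {x₀ : X}
    (hQ : StronglyAttains 𝕂 (polyEval Q) x₀) {e : Y →L[𝕂] 𝕂} (he : ‖e‖ ≤ 1)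
    (hev : ‖e (polyEval Q x₀)‖ = ‖polyEval Q x₀‖) :
    StronglyAttains 𝕂 (polyEval (e.compContinuousMultilinearMap Q)) x₀ := by
  obtain ⟨hx₀, hnorm⟩ := hQ.mem_closedBall_and_norm_eq_supNorm
  have hle (x : X) : ‖polyEval (e.compContinuousMultilinearMap Q) x‖ ≤ ‖polyEval Q x‖ :=
    (e.le_of_opNorm_le he _).trans_eq (one_mul _)
  have hsup : supNorm (polyEval (e.compContinuousMultilinearMap Q)) = supNorm (polyEval Q) := by
    refine le_antisymm (supNorm_polyEval_le _ fun x hx =>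
      (hle x).trans (norm_polyEval_le_supNorm Q hx)) ?_
    rw [← hnorm, ← hev]
    exact norm_polyEval_le_supNorm (e.compContinuousMultilinearMap Q) hx₀
  intro xs hxs hmax
  rw [hsup] at hmax
  exact hQ xs hxs (tendsto_of_tendsto_of_tendsto_of_le_of_le hmax tendsto_const_nhds
    (fun n => hle (xs n)) fun n => norm_polyEval_le_supNorm Q (hxs n))

section NumericalRadius

variable {𝕂 X : Type*} [RCLike 𝕂] [NormedAddCommGroup X] [NormedSpace 𝕂 X] {k : ℕ}

lemma numRadius_nonneg (f : X → X) : 0 ≤ numRadius 𝕂 f :=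
  Real.sSup_nonneg (by rintro _ ⟨x, x', -, -, -, rfl⟩; exact norm_nonneg _)

lemma norm_apply_polyEval_le_supNorm (L : ContinuousMultilinearMap 𝕂 (fun _ : Fin k => X) X)
    {x : X} {x' : X →L[𝕂] 𝕂} (hx : ‖x‖ ≤ 1) (hx' : ‖x'‖ ≤ 1) :
    ‖x' (polyEval L x)‖ ≤ supNorm (polyEval L) :=
  ((x'.le_of_opNorm_le hx' _).trans_eq (one_mul _)).trans
    (norm_polyEval_le_supNorm L (mem_closedBall_zero_iff.2 hx))

lemma numRadius_polyEval_le_supNorm (L : ContinuousMultilinearMap 𝕂 (fun _ : Fin k => X) X) :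
    numRadius 𝕂 (polyEval L) ≤ supNorm (polyEval L) :=
  Real.sSup_le
    (fun _ ⟨_, _, hx, hx', _, hr⟩ => hr ▸ norm_apply_polyEval_le_supNorm L hx.le hx'.le)
    ((norm_nonneg _).trans (norm_polyEval_le_supNorm L (mem_closedBall_self zero_le_one)))

lemma norm_apply_polyEval_le_numRadius (L : ContinuousMultilinearMap 𝕂 (fun _ : Fin k => X) X)
    {x : X} {x' : X →L[𝕂] 𝕂} (hx : ‖x‖ = 1) (hx' : ‖x'‖ = 1) (hxx' : x' x = 1) :
    ‖x' (polyEval L x)‖ ≤ numRadius 𝕂 (polyEval L) :=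
  le_csSup ⟨supNorm (polyEval L), fun _ ⟨_, _, hy, hy', _, hr⟩ =>
      hr ▸ norm_apply_polyEval_le_supNorm L hy.le hy'.le⟩
    ⟨x, x', hx, hx', hxx', rfl⟩

lemma exists_numRange_pair_of_norm_apply_eq_one {e : X →L[𝕂] 𝕂} {x : X} (he : ‖e‖ ≤ 1)
    (hx : ‖x‖ ≤ 1) (hex : ‖e x‖ = 1) :
    ‖x‖ = 1 ∧ ∃ x' : X →L[𝕂] 𝕂, ‖x'‖ = 1 ∧ x' x = 1 ∧ ∀ w, ‖x' w‖ = ‖e w‖ := by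
  have hbound : 1 ≤ ‖e‖ * ‖x‖ := hex ▸ e.le_opNorm x
  have hx1 : ‖x‖ = 1 := le_antisymm hx (by nlinarith [norm_nonneg x])
  have he1 : ‖e‖ = 1 := le_antisymm he (by simpa [hx1] using hbound)
  have hinv : ‖(e x)⁻¹‖ = 1 := by rw [norm_inv, hex, inv_one]
  refine ⟨hx1, (e x)⁻¹ • e, ?_, inv_mul_cancel₀ (norm_ne_zero_iff.1 (hex ▸ one_ne_zero)), ?_⟩
  · rw [norm_smul, hinv, he1, one_mul]
  · intro w
    rw [smul_apply, norm_smul, hinv, one_mul]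

variable {Q : ContinuousMultilinearMap 𝕂 (fun _ : Fin k => X) X} {x₀ : X}

lemma exists_numRange_pair_of_stronglyAttains
    (hext : ∀ x ∈ polyAttainPts 𝕂 X k, ∀ x' : X →L[𝕂] 𝕂,
      IsExtremePt (closedBall (0 : X →L[𝕂] 𝕂) 1) x' → ‖x' x‖ = 1)
    (hQ : StronglyAttains 𝕂 (polyEval Q) x₀) (hQ0 : polyEval Q x₀ ≠ 0) :
    ‖x₀‖ = 1 ∧ ∃ x' : X →L[𝕂] 𝕂, ‖x'‖ = 1 ∧ x' x₀ = 1 ∧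
      ‖x' (polyEval Q x₀)‖ = supNorm (polyEval Q) := by
  obtain ⟨hx₀, hnorm⟩ := hQ.mem_closedBall_and_norm_eq_supNorm
  obtain ⟨e, hext_e, hev⟩ := exists_isExtremePt_apply_eq_norm (𝕂 := 𝕂) (polyEval Q x₀)
  have he : ‖e‖ ≤ 1 := mem_closedBall_zero_iff.1 hext_e.1
  have hev' : ‖e (polyEval Q x₀)‖ = ‖polyEval Q x₀‖ := by simp [hev]
  have hmem : x₀ ∈ polyAttainPts 𝕂 X k := by
    refine ⟨hx₀, e.compContinuousMultilinearMap Q, fun h => hQ0 ?_,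
      hQ.comp_of_norm_apply_eq he hev'⟩
    have : e (polyEval Q x₀) = 0 := congrFun h x₀
    rwa [this, norm_zero, eq_comm, norm_eq_zero] at hev'
  obtain ⟨hx₀1, x', hx', hx'x₀, hx'e⟩ :=
    exists_numRange_pair_of_norm_apply_eq_one he (mem_closedBall_zero_iff.1 hx₀)
      (hext x₀ hmem e hext_e)
  exact ⟨hx₀1, x', hx', hx'x₀, by rw [hx'e, hev', hnorm]⟩

lemma supNorm_polyEval_le_numRadius {P : ContinuousMultilinearMap 𝕂 (fun _ : Fin k => X) X}
    (hext : ∀ x ∈ polyAttainPts 𝕂 X k, ∀ x' : X →L[𝕂] 𝕂,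
      IsExtremePt (closedBall (0 : X →L[𝕂] 𝕂) 1) x' → ‖x' x‖ = 1)
    (happrox : ∀ ε > (0 : ℝ), ∃ (Q : ContinuousMultilinearMap 𝕂 (fun _ : Fin k => X) X) (x₀ : X),
      StronglyAttains 𝕂 (polyEval Q) x₀ ∧
        ∀ x ∈ closedBall (0 : X) 1, ‖polyEval P x - polyEval Q x‖ ≤ ε) :
    supNorm (polyEval P) ≤ numRadius 𝕂 (polyEval P) := by
  refine le_of_forall_pos_le_add fun ε hε => ?_
  obtain ⟨Q, x₀, hQ, hPQ⟩ := happrox (ε / 2) (half_pos hε)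
  have hsup : supNorm (polyEval P) ≤ supNorm (polyEval Q) + ε / 2 :=
    supNorm_polyEval_le P fun x hx => by
      linarith [norm_sub_norm_le (polyEval P x) (polyEval Q x), hPQ x hx,
        norm_polyEval_le_supNorm Q hx]
  by_cases hQ0 : polyEval Q x₀ = 0
  · have hQsup : supNorm (polyEval Q) = 0 := by
      rw [← hQ.mem_closedBall_and_norm_eq_supNorm.2, hQ0, norm_zero]
    linarith [numRadius_nonneg (𝕂 := 𝕂) (polyEval P)]
  obtain ⟨hx₀, x', hx', hx'x₀, hval⟩ := exists_numRange_pair_of_stronglyAttains hext hQ hQ0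
  have hdiff : ‖x' (polyEval Q x₀)‖ - ‖x' (polyEval P x₀)‖ ≤ ε / 2 := by
    refine (norm_sub_norm_le _ _).trans ?_
    rw [← map_sub]
    refine (x'.le_of_opNorm_le hx'.le _).trans ?_
    rw [one_mul, norm_sub_rev]
    exact hPQ x₀ (mem_closedBall_zero_iff.2 hx₀.le)
  linarith [norm_apply_polyEval_le_numRadius P hx₀ hx' hx'x₀]

end NumericalRadius

lemma exists_supNorm_polyEval_eq_one (𝕂 X : Type*) [RCLike 𝕂] [NormedAddCommGroup X]
    [NormedSpace 𝕂 X] [Nontrivial X] (k : ℕ) :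
    ∃ L : ContinuousMultilinearMap 𝕂 (fun _ : Fin k => X) X, supNorm (polyEval L) = 1 := by
  obtain ⟨u, hu⟩ := exists_ne (0 : X)
  set u₁ : X := (‖u‖⁻¹ : 𝕂) • u
  have hu₁ : ‖u₁‖ = 1 := norm_smul_inv_norm hu
  obtain ⟨g, hg, hgu⟩ := exists_dual_vector 𝕂 u₁ (hu₁ ▸ one_ne_zero)
  let L := ((ContinuousMultilinearMap.mkPiAlgebra 𝕂 (Fin k) 𝕂).compContinuousLinearMap
    fun _ => g).smulRight u₁
  have hL (x : X) : ‖polyEval L x‖ = ‖g x‖ ^ k := by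
    simp [L, polyEval, hu₁, norm_smul, Finset.prod_const]
  refine ⟨L, le_antisymm (supNorm_polyEval_le L fun x hx => ?_) ?_⟩
  · rw [hL]
    exact pow_le_one₀ (norm_nonneg _)
      ((g.le_of_opNorm_le hg.le x).trans ((one_mul _).trans_le (mem_closedBall_zero_iff.1 hx)))
  · calc (1 : ℝ) = ‖polyEval L u₁‖ := by simp [hL, hgu, hu₁]
      _ ≤ supNorm (polyEval L) := norm_polyEval_le_supNorm L (mem_closedBall_zero_iff.2 hu₁.le)

theorem statement6_general {𝕂 X : Type*} [RCLike 𝕂] [NormedAddCommGroup X] [NormedSpace 𝕂 X]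
    [Nontrivial X] {k : ℕ}
    (happrox : ∀ P : ContinuousMultilinearMap 𝕂 (fun _ : Fin k => X) X, ∀ ε > (0 : ℝ),
      ∃ (Q : ContinuousMultilinearMap 𝕂 (fun _ : Fin k => X) X) (x₀ : X),
        StronglyAttains 𝕂 (polyEval Q) x₀ ∧
          ∀ x ∈ Metric.closedBall (0 : X) 1, ‖polyEval P x - polyEval Q x‖ ≤ ε)
    (hext : ∀ x ∈ polyAttainPts 𝕂 X k, ∀ x' : X →L[𝕂] 𝕂,
      IsExtremePt (Metric.closedBall (0 : X →L[𝕂] 𝕂) 1) x' → ‖x' x‖ = 1) :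
    polyNumIndex 𝕂 X k = 1 := by
  have hvalues : {r | ∃ L : ContinuousMultilinearMap 𝕂 (fun _ : Fin k => X) X,
      supNorm (polyEval L) = 1 ∧ r = numRadius 𝕂 (polyEval L)} = {1} := by
    refine eq_singleton_iff_nonempty_unique_mem.2 ⟨?_, ?_⟩
    · obtain ⟨L, hL⟩ := exists_supNorm_polyEval_eq_one 𝕂 X k
      exact ⟨_, L, hL, rfl⟩
    · rintro _ ⟨L, hL, rfl⟩
      exact le_antisymm (hL ▸ numRadius_polyEval_le_supNorm L)
        (hL ▸ supNorm_polyEval_le_numRadius hext (happrox L))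
  rw [polyNumIndex, hvalues, csInf_singleton]

/-- if every `P ∈ 𝒫(ᵏX : X)` is a limit of strongly norm-attaining polynomials
and `|x*(x)| = 1` for all `x ∈ ρ̃𝒫(ᵏX)` and extreme `x*` of `B_{X*}`, then `n^(k)(X) = 1`. -/
theorem statement6 {𝕂 X : Type*} [RCLike 𝕂] [NormedAddCommGroup X] [NormedSpace 𝕂 X]
    [CompleteSpace X] [Nontrivial X] {k : ℕ} (hk : 1 ≤ k)
    (happrox : ∀ P : ContinuousMultilinearMap 𝕂 (fun _ : Fin k => X) X, ∀ ε > (0 : ℝ),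
      ∃ (Q : ContinuousMultilinearMap 𝕂 (fun _ : Fin k => X) X) (x₀ : X),
        StronglyAttains 𝕂 (polyEval Q) x₀ ∧
          ∀ x ∈ Metric.closedBall (0 : X) 1, ‖polyEval P x - polyEval Q x‖ ≤ ε)
    (hext : ∀ x ∈ polyAttainPts 𝕂 X k, ∀ x' : X →L[𝕂] 𝕂,
      IsExtremePt (Metric.closedBall (0 : X →L[𝕂] 𝕂) 1) x' → ‖x' x‖ = 1) :
    polyNumIndex 𝕂 X k = 1 :=
  statement6_general happrox hext
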